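/- Let K be a field of characteristic 0 and f ∈ K[z] of degree d ≥ 2. If φ and ψ are two Böttcher coordinates of f (formal Laurent series in z·K̄[[1/z]] with nonzero linear coefficient satisfying φ∘f = φ^d and ψ∘f = ψ^d), then ψ = ζ·φ for some (d−1)-th root of unity ζ. -/

import Mathlib

/-!
Write `F = f(z)`, a Laurent series in `1/z` with leading term `c z^d`, and `a`, `b` for the
coefficients of `z` in `φ`, `ψ`. In `φ(F) = ∑ₙ φ.coeff n • F^{-n}` the terms with `n ≥ m ≥ 0` are
`O(z^{-m})`, so only `a F` reaches `z^d`, and comparing `z^d`-coefficients in `φ(F) = φ^d` gives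
`a^{d-1} = c`. Hence `ζ = b / a` is a `(d-1)`-th root of unity, and `ζ φ` is again a Böttcher
coordinate, with leading coefficient `b`.

Two Böttcher coordinates `φ, ψ` with the same leading coefficient `b` coincide: otherwise
`δ = ψ - φ` is exactly of order `z^{-m}` for some `m ≥ 0`, so `ψ^d - φ^d = δ(F)` is `O(z^{-m})`,
whereas `ψ^d - φ^d = δ · ∑ⱼ ψ^j φ^{d-1-j}` is exactly of order `z^{d-1-m}`, the sum having leading
coefficient `d b^{d-1} ≠ 0` in characteristic zero.
-/

open Polynomial

noncomputable section

/-- The element `z = X⁻¹` of the field of formal Laurent series `K((X))`,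
where the variable `X` is interpreted as `1/z`; thus `K((X)) = K((1/z))`. -/
def Zvar (K : Type*) [Field K] : LaurentSeries K := HahnSeries.single (-1) 1

/-- Composition `φ(u)`: the Laurent series `φ ∈ K((1/z))` is viewed as the function
`z ↦ ∑ₙ φ.coeff n · z^{-n}` (so that `φ = lcomp φ (Zvar K)`), and is evaluated at `u`.
The sum converges in the `X`-adic topology whenever `u` is a polynomial in `z` of
positive degree. -/
def lcomp {K : Type*} [Field K] (φ u : LaurentSeries K) : LaurentSeries K :=
  ∑' n : ℤ, φ.coeff n • u ^ (-n)

/-- `φ` is a Böttcher coordinate of the degree-`d` polynomial `f`: a formal Laurent series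
`φ(z) = a₁ z + a₀ + a₋₁/z + ⋯ ∈ z·K[[1/z]]` with `a₁ ≠ 0` such that `φ(f(z)) = φ(z)^d`. -/
def IsBottcher {K : Type*} [Field K] (f : Polynomial K) (d : ℕ) (φ : LaurentSeries K) : Prop :=
  (∀ n : ℤ, n < -1 → φ.coeff n = 0) ∧ φ.coeff (-1) ≠ 0 ∧
    lcomp φ (aeval (Zvar K) f) = φ ^ d

namespace HahnSeries

variable {Γ R : Type*}

section Order

variable [LinearOrder Γ] [Zero Γ] [AddCommMonoid R]

theorem orderTop_sum_of_order_eq {ι : Type*} {s : Finset ι} {x : ι → R⟦Γ⟧} {g : Γ}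
    (hx : ∀ i ∈ s, (x i).order = g) (h : ∑ i ∈ s, (x i).leadingCoeff ≠ 0) :
    (∑ i ∈ s, x i).orderTop = g := by
  refine orderTop_eq_of_le ?_ fun g' hg' => ?_
  · rwa [mem_support, coeff_sum,
      Finset.sum_congr rfl fun i hi => by rw [← hx i hi, ← leadingCoeff_eq]]
  · by_contra! hlt
    refine hg' ?_
    rw [coeff_sum]
    exact Finset.sum_eq_zero fun i hi => coeff_eq_zero_of_lt_order (hx i hi ▸ hlt)

end Order

section Domain

variable [AddCommMonoid Γ] [LinearOrder Γ] [IsOrderedCancelAddMonoid Γ]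

theorem leadingCoeff_pow [Semiring R] [NoZeroDivisors R] (x : R⟦Γ⟧) (n : ℕ) :
    (x ^ n).leadingCoeff = x.leadingCoeff ^ n := by
  induction n with
  | zero => simp
  | succ n ih => rw [pow_succ, leadingCoeff_mul, ih, pow_succ]

theorem orderTop_pow_sub_pow [CommRing R] [IsDomain R] {x y : R⟦Γ⟧} {n : ℕ}
    (hord : x.order = y.order) (hlc : x.leadingCoeff = y.leadingCoeff) (hx : x ≠ 0)
    (hn : (n : R) ≠ 0) :
    (x ^ n - y ^ n).orderTop = (x - y).orderTop + ((n - 1) • x.order : Γ) := by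
  have hy : y ≠ 0 := leadingCoeff_ne_zero.mp (hlc ▸ leadingCoeff_ne_zero.mpr hx)
  have hterm : ∀ j ∈ Finset.range n, j + (n - 1 - j) = n - 1 := fun j hj => by
    have := Finset.mem_range.mp hj; omega
  rw [← geom_sum₂_mul, mul_comm, orderTop_mul, orderTop_sum_of_order_eq]
  · intro j hj
    rw [order_mul (pow_ne_zero _ hx) (pow_ne_zero _ hy), order_pow, order_pow, ← hord,
      ← add_nsmul, hterm j hj]
  · have hlc_term : ∀ j ∈ Finset.range n,
        (x ^ j * y ^ (n - 1 - j)).leadingCoeff = x.leadingCoeff ^ (n - 1) := fun j hj => by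
      rw [leadingCoeff_mul, leadingCoeff_pow, leadingCoeff_pow, ← hlc, ← _root_.pow_add,
        hterm j hj]
    rw [Finset.sum_congr rfl hlc_term, Finset.sum_const, Finset.card_range, nsmul_eq_mul]
    exact mul_ne_zero hn (pow_ne_zero _ (leadingCoeff_ne_zero.mpr hx))

end Domain

theorem order_inv [AddCommGroup Γ] [LinearOrder Γ] [IsOrderedAddMonoid Γ] [Field R]
    (x : R⟦Γ⟧) : x⁻¹.order = -x.order := by
  rcases eq_or_ne x 0 with rfl | hx
  · simp
  · have h := order_mul (inv_ne_zero hx) hx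
    rw [inv_mul_cancel₀ hx, order_one] at h
    exact eq_neg_of_add_eq_zero_left h.symm

theorem order_zpow [AddCommGroup Γ] [LinearOrder Γ] [IsOrderedAddMonoid Γ] [Field R]
    (x : R⟦Γ⟧) (n : ℤ) : (x ^ n).order = n • x.order := by
  cases n with
  | ofNat n => simp
  | negSucc n => rw [zpow_negSucc, order_inv, order_pow, negSucc_zsmul]

end HahnSeries

namespace LaurentSeries

variable {K : Type*} [Field K]

theorem coeff_tsum_eq_zero {ι : Type*} {g : ι → LaurentSeries K} {k : ℤ}
    (h : ∀ i, (g i).coeff k = 0) : (∑' i, g i).coeff k = 0 := by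
  by_cases hg : Summable g
  · let _ : UniformSpace K := ⊥
    have hcoeff :=
      hg.hasSum.map (HahnSeries.coeff.addMonoidHom k) (uniformContinuous_coeff k).continuous
    have hzero : (HahnSeries.coeff.addMonoidHom k : LaurentSeries K →+ K) ∘ g = 0 := funext h
    rw [hzero] at hcoeff
    exact hcoeff.unique hasSum_zero
  · rw [tsum_eq_zero_of_not_summable hg, HahnSeries.coeff_zero]

theorem le_orderTop_sub {x y : LaurentSeries K} {e : ℤ} (hx : ∀ n < e, x.coeff n = 0)
    (hy : ∀ n < e, y.coeff n = 0) (h : x.coeff e = y.coeff e) :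
    ((e + 1 : ℤ) : WithTop ℤ) ≤ (x - y).orderTop := by
  refine HahnSeries.le_orderTop_iff_forall.mpr fun k hk => ?_
  rw [HahnSeries.coeff_sub, sub_eq_zero]
  rcases lt_or_eq_of_le (Int.lt_add_one_iff.mp (WithTop.coe_lt_coe.mp hk)) with hk | rfl
  · rw [hx k hk, hy k hk]
  · exact h

end LaurentSeries

section Composition

variable {K : Type*} [Field K]

theorem coeff_aeval_Zvar_neg_natCast (f : K[X]) (n : ℕ) :
    (aeval (Zvar K) f).coeff (-n) = f.coeff n := by
  have hC : ∀ a : K, algebraMap K (LaurentSeries K) a = HahnSeries.C a := fun a => by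
    rw [HahnSeries.algebraMap_apply', ← PowerSeries.C_eq_algebraMap, HahnSeries.ofPowerSeries_C]
  simp only [aeval_eq_sum_range, HahnSeries.coeff_sum, Algebra.smul_def (R := K), hC,
    HahnSeries.C_mul_eq_smul, HahnSeries.coeff_smul, Zvar, HahnSeries.single_pow,
    HahnSeries.coeff_single, one_pow, smul_neg, nsmul_eq_mul, mul_one, neg_inj, Nat.cast_inj,
    mul_ite, mul_zero, Finset.sum_ite_eq, Finset.mem_range, Algebra.algebraMap_self,
    RingHom.id_apply]
  split_ifs with hn
  · rfl
  · exact (coeff_eq_zero_of_natDegree_lt (by omega)).symm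

theorem order_aeval_Zvar_le_neg_one {f : K[X]} (hf : 0 < f.natDegree) :
    (aeval (Zvar K) f).order ≤ -1 := by
  refine (HahnSeries.order_le_of_coeff_ne_zero ?_).trans (show -(f.natDegree : ℤ) ≤ -1 by omega)
  rw [coeff_aeval_Zvar_neg_natCast, ← Polynomial.leadingCoeff, Polynomial.leadingCoeff_ne_zero]
  exact ne_zero_of_natDegree_gt hf

theorem lcomp_sub {χ χ' u : LaurentSeries K}
    (hχ : Summable fun n : ℤ => χ.coeff n • u ^ (-n))
    (hχ' : Summable fun n : ℤ => χ'.coeff n • u ^ (-n)) :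
    lcomp (χ - χ') u = lcomp χ u - lcomp χ' u := by
  simp only [lcomp, HahnSeries.coeff_sub, sub_smul]
  exact hχ.tsum_sub hχ'

theorem lcomp_smul (c : K) (χ u : LaurentSeries K) : lcomp (c • χ) u = c • lcomp χ u := by
  simp only [lcomp, HahnSeries.coeff_smul, smul_eq_mul, mul_smul]
  simp only [← HahnSeries.C_mul_eq_smul (r := c)]
  exact tsum_mul_left

theorem hasSum_lcomp_single (m : ℤ) (c : K) (u : LaurentSeries K) :
    HasSum (fun n : ℤ => (HahnSeries.single m c : LaurentSeries K).coeff n • u ^ (-n))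
      (c • u ^ (-m)) := by
  have h := hasSum_single
    (f := fun n : ℤ => (HahnSeries.single m c : LaurentSeries K).coeff n • u ^ (-n)) m
    fun n hn => by rw [HahnSeries.coeff_single_of_ne hn, zero_smul]
  rwa [HahnSeries.coeff_single_same] at h

theorem le_orderTop_lcomp {χ u : LaurentSeries K} {m : ℤ} (hm : 0 ≤ m)
    (hχ : (m : WithTop ℤ) ≤ χ.orderTop) (hu : u.order ≤ -1) :
    (m : WithTop ℤ) ≤ (lcomp χ u).orderTop := by
  rw [HahnSeries.le_orderTop_iff_forall] at hχ ⊢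
  intro k hk
  refine LaurentSeries.coeff_tsum_eq_zero fun n => ?_
  rw [HahnSeries.coeff_smul, smul_eq_mul]
  rcases lt_or_ge n m with hn | hn
  · rw [hχ n (WithTop.coe_lt_coe.mpr hn), zero_mul]
  · have hk' : k < (u ^ (-n)).order := by
      rw [HahnSeries.order_zpow, smul_eq_mul]
      have : k < m := WithTop.coe_lt_coe.mp hk
      nlinarith
    rw [HahnSeries.coeff_eq_zero_of_lt_order hk', mul_zero]

end Composition

namespace IsBottcher

variable {K : Type*} [Field K] {f : K[X]} {d : ℕ} {φ ψ : LaurentSeries K}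

theorem ne_zero (h : IsBottcher f d φ) : φ ≠ 0 :=
  fun h0 => h.2.1 (by rw [h0, HahnSeries.coeff_zero])

theorem order_eq (h : IsBottcher f d φ) : φ.order = -1 :=
  le_antisymm (HahnSeries.order_le_of_coeff_ne_zero h.2.1)
    ((HahnSeries.le_order_iff_forall h.ne_zero).mpr h.1)

theorem leadingCoeff_eq (h : IsBottcher f d φ) : φ.leadingCoeff = φ.coeff (-1) := by
  rw [HahnSeries.leadingCoeff_eq, h.order_eq]

theorem summable (h : IsBottcher f d φ) :
    Summable fun n : ℤ => φ.coeff n • aeval (Zvar K) f ^ (-n) := by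
  by_contra hns
  refine pow_ne_zero d h.ne_zero ?_
  rw [← h.2.2]
  exact tsum_eq_zero_of_not_summable hns

theorem coeff_neg_one_pow (h : IsBottcher f d φ) (hdeg : f.natDegree = d) (hd : 0 < d) :
    φ.coeff (-1) ^ (d - 1) = f.leadingCoeff := by
  set F := aeval (Zvar K) f
  set a := φ.coeff (-1)
  have hsingle := hasSum_lcomp_single (-1) a F
  rw [neg_neg, zpow_one] at hsingle
  have hsplit : φ ^ d = a • F + lcomp (φ - HahnSeries.single (-1) a) F := by
    rw [lcomp_sub h.summable hsingle.summable, ← h.2.2, lcomp, lcomp, hsingle.tsum_eq,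
      add_sub_cancel]
  have hrest : (lcomp (φ - HahnSeries.single (-1) a) F).coeff (-d) = 0 := by
    have hlow := le_orderTop_lcomp (by norm_num)
      (LaurentSeries.le_orderTop_sub h.1 (fun n hn => HahnSeries.coeff_single_of_ne hn.ne)
        (HahnSeries.coeff_single_same _ _).symm)
      (order_aeval_Zvar_le_neg_one (hdeg ▸ hd))
    exact HahnSeries.coeff_eq_zero_of_lt_orderTop
      (lt_of_lt_of_le (WithTop.coe_lt_coe.mpr (by omega)) hlow)
  have hlead : (φ ^ d).coeff (-d) = a ^ d := by
    rw [show a = φ.leadingCoeff from h.leadingCoeff_eq.symm, ← HahnSeries.leadingCoeff_pow,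
      HahnSeries.leadingCoeff_eq, HahnSeries.order_pow, h.order_eq, smul_neg, nsmul_one]
  have hF : F.coeff (-d) = f.leadingCoeff := by
    rw [← hdeg]
    exact coeff_aeval_Zvar_neg_natCast f _
  have hcoeff := congrArg (HahnSeries.coeff · (-(d : ℤ))) hsplit
  simp only [HahnSeries.coeff_add, HahnSeries.coeff_smul, smul_eq_mul, hrest, add_zero, hlead,
    hF] at hcoeff
  rw [← pow_sub_one_mul hd.ne', mul_comm] at hcoeff
  exact mul_left_cancel₀ h.2.1 hcoeff

theorem smul (h : IsBottcher f d φ) (hd : 2 ≤ d) {ζ : K} (hζ : ζ ^ (d - 1) = 1) :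
    IsBottcher f d (ζ • φ) := by
  have hζ0 : ζ ≠ 0 := by
    rintro rfl
    rw [zero_pow (by omega)] at hζ
    exact zero_ne_one hζ
  refine ⟨fun n hn => ?_, ?_, ?_⟩
  · rw [HahnSeries.coeff_smul, h.1 n hn, smul_zero]
  · rw [HahnSeries.coeff_smul, smul_eq_mul]
    exact mul_ne_zero hζ0 h.2.1
  · have hζd : ζ ^ d = ζ := by rw [← pow_sub_one_mul (by omega : d ≠ 0), hζ, one_mul]
    rw [lcomp_smul, h.2.2, ← HahnSeries.C_mul_eq_smul, ← HahnSeries.C_mul_eq_smul, mul_pow,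
      ← map_pow, hζd]

theorem eq_of_coeff_neg_one_eq [CharZero K] (hφ : IsBottcher f d φ) (hψ : IsBottcher f d ψ)
    (hdeg : f.natDegree = d) (hd : 2 ≤ d) (h : φ.coeff (-1) = ψ.coeff (-1)) : φ = ψ := by
  rw [← sub_eq_zero, ← HahnSeries.orderTop_eq_top]
  by_contra htop
  obtain ⟨m, hm⟩ := WithTop.ne_top_iff_exists.mp htop
  have hm0 : 0 ≤ m := by
    have := WithTop.coe_le_coe.mp (hm ▸ LaurentSeries.le_orderTop_sub hφ.1 hψ.1 h)
    omega
  have hlc : φ.leadingCoeff = ψ.leadingCoeff := by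
    rw [hφ.leadingCoeff_eq, hψ.leadingCoeff_eq, h]
  have hpow := HahnSeries.orderTop_pow_sub_pow (n := d) (hφ.order_eq.trans hψ.order_eq.symm) hlc
    hφ.ne_zero (Nat.cast_ne_zero.mpr (by omega))
  have hlow : (m : WithTop ℤ) ≤ (φ ^ d - ψ ^ d).orderTop := by
    rw [← hφ.2.2, ← hψ.2.2, ← lcomp_sub hφ.summable hψ.summable]
    exact le_orderTop_lcomp hm0 hm.le (order_aeval_Zvar_le_neg_one (by omega))
  rw [hpow, ← hm, hφ.order_eq, smul_neg, nsmul_one, ← WithTop.coe_add, WithTop.coe_le_coe]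
    at hlow
  omega

end IsBottcher

/-- Let `K` be a field of characteristic 0 and `f ∈ K[z]` of degree
`d ≥ 2`.  If `φ` and `ψ` are two Böttcher coordinates of `f`, then `ψ = ζ·φ` for some
`(d−1)`-th root of unity `ζ`. -/
theorem stmt4 (K : Type*) [Field K] [CharZero K] (f : Polynomial K) (d : ℕ)
    (hd : 2 ≤ d) (hdeg : f.natDegree = d)
    (φ ψ : LaurentSeries K) (hφ : IsBottcher f d φ) (hψ : IsBottcher f d ψ) :
    ∃ ζ : K, ζ ^ (d - 1) = 1 ∧ ψ = ζ • φ := by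
  have hf : f.leadingCoeff ≠ 0 := leadingCoeff_ne_zero.mpr (ne_zero_of_natDegree_gt (hdeg ▸ hd))
  set ζ := ψ.coeff (-1) / φ.coeff (-1)
  have hζ : ζ ^ (d - 1) = 1 := by
    rw [div_pow, hφ.coeff_neg_one_pow hdeg (by omega), hψ.coeff_neg_one_pow hdeg (by omega),
      div_self hf]
  refine ⟨ζ, hζ, hψ.eq_of_coeff_neg_one_eq (hφ.smul hd hζ) hdeg hd ?_⟩
  rw [HahnSeries.coeff_smul, smul_eq_mul, div_mul_cancel₀ _ hφ.2.1]
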